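/- As z → 1 within the slit plane, κ₁(z) = z + c(z)(1−z)^{3/2} where c(z) → 2√2/(3π); more precisely, lim_{z→1} (κ₁(z) − z)/(1−z)^{3/2} = 2√2/(3π). -/

import Mathlib

open Real Complex Filter

/-- The slit plane `ℂ \ [1,∞) \ (−∞,−1]`. -/
def Dslit : Set ℂ := {z : ℂ | ¬(z.im = 0 ∧ (1 ≤ z.re ∨ z.re ≤ -1))}

/-- Analytic extension of the degree-1 arc-cosine kernel to the slit plane. -/
noncomputable def K1C (z : ℂ) : ℂ :=
  (z * ((Real.pi : ℂ) + Complex.I * Complex.log (z + Complex.I * ((1 - z ^ 2) ^ ((1 : ℂ) / 2))))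
    + (1 - z ^ 2) ^ ((1 : ℂ) / 2)) / (Real.pi : ℂ)

/-!
Put `u = √(1 - z)` and `s = √(1 + z)`, so that `u² = 1 - z` and `s² = 1 + z`. On the slit plane
the arguments of `1 - z` and `1 + z` have opposite signs, hence `√(1 - z²) = u s` and the logarithm
in `K1C` is `log (1 + g)` with `g = i u s - u² = O(u)`. Replacing `log (1 + g)` by its cubic Taylor
polynomial, `i z log (1 + g) + u s` becomes `u³` times a polynomial in `u` and `s`, whose value at
`u = 0`, `s = √2` is `2√2/3`; the Taylor remainder is `O(u⁴) = o(u³)`.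
-/

open Topology Asymptotics

namespace Complex

lemma logTaylor_four (z : ℂ) : logTaylor 4 z = z - z ^ 2 / 2 + z ^ 3 / 3 := by
  simp only [logTaylor, Finset.sum_range_succ, Finset.sum_range_zero]
  norm_num
  ring

lemma arg_nonpos_of_im_nonpos {w : ℂ} (hw : w ∈ slitPlane) (h : w.im ≤ 0) : arg w ≤ 0 := by
  rcases h.lt_or_eq with h | h
  · exact (arg_neg_iff.2 h).le
  · have hre : 0 < w.re := by simpa [mem_slitPlane_iff, h] using hw
    exact (arg_eq_zero_iff.2 ⟨hre.le, h⟩).le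

lemma arg_add_arg_mem_Ioc {a b : ℂ} (ha : a ∈ slitPlane) (hb : b ∈ slitPlane)
    (hab : a.im * b.im ≤ 0) : arg a + arg b ∈ Set.Ioc (-π) π := by
  have ha' : arg a < π := lt_of_le_of_ne (arg_le_pi a) (mem_slitPlane_iff_arg.mp ha).1
  have hb' : arg b < π := lt_of_le_of_ne (arg_le_pi b) (mem_slitPlane_iff_arg.mp hb).1
  have := neg_pi_lt_arg a
  have := neg_pi_lt_arg b
  rcases mul_nonpos_iff.1 hab with ⟨ha0, hb0⟩ | ⟨ha0, hb0⟩
  · have := arg_nonneg_iff.2 ha0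
    have := arg_nonpos_of_im_nonpos hb hb0
    constructor <;> linarith
  · have := arg_nonpos_of_im_nonpos ha ha0
    have := arg_nonneg_iff.2 hb0
    constructor <;> linarith

lemma mul_cpow_of_im_mul_nonpos {a b : ℂ} (ha : a ∈ slitPlane) (hb : b ∈ slitPlane)
    (hab : a.im * b.im ≤ 0) (c : ℂ) : (a * b) ^ c = a ^ c * b ^ c := by
  have ha0 := slitPlane_ne_zero ha
  have hb0 := slitPlane_ne_zero hb
  rw [cpow_def_of_ne_zero (mul_ne_zero ha0 hb0), cpow_def_of_ne_zero ha0,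
    cpow_def_of_ne_zero hb0, log_mul ha0 hb0 (arg_add_arg_mem_Ioc ha hb hab), add_mul, exp_add]

lemma isLittleO_log_one_add_sub_logTaylor {α : Type*} {l : Filter α} {g u : α → ℂ}
    (hu : Tendsto u l (𝓝 0)) (hg : g =O[l] u) (n : ℕ) :
    (fun x ↦ log (1 + g x) - logTaylor (n + 1) (g x)) =o[l] fun x ↦ u x ^ n := by
  have hu' : (fun x ↦ u x ^ (n + 1)) =o[l] fun x ↦ u x ^ n := by
    simpa [pow_succ] using (isBigO_refl (fun x ↦ u x ^ n) l).mul_isLittleO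
      (isLittleO_one_iff ℂ |>.2 hu)
  exact ((log_sub_logTaylor_isBigO n).comp_tendsto (hg.trans_tendsto hu)).trans_isLittleO
    ((hg.pow (n + 1)).trans_isLittleO hu')

end Complex

lemma one_sub_mem_slitPlane_of_mem_Dslit {z : ℂ} (hz : z ∈ Dslit) : 1 - z ∈ slitPlane := by
  simp only [Dslit, Set.mem_ofPred_eq] at hz
  rw [mem_slitPlane_iff]
  simp only [sub_re, one_re, sub_im, one_im]
  grind

lemma one_add_mem_slitPlane_of_mem_Dslit {z : ℂ} (hz : z ∈ Dslit) : 1 + z ∈ slitPlane := by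
  simp only [Dslit, Set.mem_ofPred_eq] at hz
  rw [mem_slitPlane_iff]
  simp only [add_re, one_re, add_im, one_im]
  grind

lemma cpow_one_sub_sq_of_mem_Dslit {z : ℂ} (hz : z ∈ Dslit) (c : ℂ) :
    (1 - z ^ 2) ^ c = (1 - z) ^ c * (1 + z) ^ c := by
  rw [show 1 - z ^ 2 = (1 - z) * (1 + z) by ring]
  refine mul_cpow_of_im_mul_nonpos (one_sub_mem_slitPlane_of_mem_Dslit hz)
    (one_add_mem_slitPlane_of_mem_Dslit hz) ?_ c
  simp only [sub_im, one_im, add_im]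
  nlinarith [sq_nonneg z.im]

noncomputable def k1Coeff (u s : ℂ) : ℂ :=
  ((2 - 3 * u ^ 2 + 4 * u ^ 4) * s + I * u * (3 - 7 * u ^ 2 + 4 * u ^ 4)) / 3

lemma continuous_k1Coeff : Continuous fun p : ℂ × ℂ ↦ k1Coeff p.1 p.2 := by
  unfold k1Coeff
  fun_prop

lemma I_mul_logTaylor_add_eq_pow_three_mul_k1Coeff {u s z : ℂ} (hu : u ^ 2 = 1 - z)
    (hs : s ^ 2 = 1 + z) :
    I * z * logTaylor 4 (I * u * s - u ^ 2) + u * s = u ^ 3 * k1Coeff u s := by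
  obtain rfl : z = 1 - u ^ 2 := by linear_combination hu
  rw [logTaylor_four, k1Coeff]
  linear_combination (I * u ^ 2 * (1 + u ^ 2 - 2 * u ^ 4) / 2 + u ^ 3 * s * (1 - u ^ 2) / 3) * hs
    + (u * s * (1 - u ^ 6) + (I ^ 2 - 1) * s ^ 2 * u ^ 3 * s * (1 - u ^ 2) / 3
      - I * u ^ 2 * s ^ 2 * (1 + u ^ 2 - 2 * u ^ 4) / 2) * I_sq

lemma K1C_sub_self_div_eq {z u s : ℂ} (hz : z ∈ Dslit) (hu : (1 - z) ^ (1 / 2 : ℂ) = u)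
    (hs : (1 + z) ^ (1 / 2 : ℂ) = s) :
    (K1C z - z) / (1 - z) ^ (3 / 2 : ℂ) = (k1Coeff u s + I * z *
      ((Complex.log (1 + (I * u * s - u ^ 2)) - logTaylor 4 (I * u * s - u ^ 2)) / u ^ 3)) / π := by
  have hu2 : u ^ 2 = 1 - z := by rw [← hu, one_div, cpow_ofNat_inv_pow]
  have hs2 : s ^ 2 = 1 + z := by rw [← hs, one_div, cpow_ofNat_inv_pow]
  have hu0 : u ≠ 0 := fun h ↦
    slitPlane_ne_zero (one_sub_mem_slitPlane_of_mem_Dslit hz) (by rw [← hu2, h]; ring)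
  have h32 : (1 - z) ^ (3 / 2 : ℂ) = u ^ 3 := by
    rw [← hu, ← cpow_nat_mul]
    norm_num
  have hK : K1C z - z = (I * z * Complex.log (1 + (I * u * s - u ^ 2)) + u * s) / π := by
    rw [K1C, cpow_one_sub_sq_of_mem_Dslit hz, hu, hs,
      show z + I * (u * s) = 1 + (I * u * s - u ^ 2) by linear_combination hu2]
    field_simp
    ring
  have key := I_mul_logTaylor_add_eq_pow_three_mul_k1Coeff hu2 hs2
  rw [hK, h32]
  generalize I * u * s - u ^ 2 = g at key ⊢
  field_simp
  linear_combination key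

lemma tendsto_log_remainder_div_pow_three {α : Type*} {l : Filter α} {u s : α → ℂ} {s₀ : ℂ}
    (hu : Tendsto u l (𝓝 0)) (hs : Tendsto s l (𝓝 s₀)) :
    Tendsto (fun x ↦ (Complex.log (1 + (I * u x * s x - u x ^ 2))
      - logTaylor 4 (I * u x * s x - u x ^ 2)) / u x ^ 3) l (𝓝 0) := by
  have hg : (fun x ↦ I * u x * s x - u x ^ 2) =O[l] u := by
    have hbdd := ((tendsto_const_nhds (x := I)).mul hs |>.sub hu).isBigO_one ℂ
    simpa [mul_sub, mul_comm, mul_left_comm, sq] using (isBigO_refl u l).mul hbdd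
  exact (isLittleO_log_one_add_sub_logTaylor hu hg 3).tendsto_div_nhds_zero

lemma tendsto_cpow_half_one_sub : Tendsto (fun z : ℂ ↦ (1 - z) ^ (1 / 2 : ℂ)) (𝓝 1) (𝓝 0) := by
  have h : Tendsto (fun z : ℂ ↦ 1 - z) (𝓝 1) (𝓝 0) := by
    simpa using (tendsto_id (x := 𝓝 (1 : ℂ))).const_sub 1
  simpa [Function.comp_def] using (continuousAt_cpow_const_of_re_pos (z := 0) (w := 1 / 2)
    (by simp) (by norm_num)).tendsto.comp h

lemma tendsto_cpow_half_one_add :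
    Tendsto (fun z : ℂ ↦ (1 + z) ^ (1 / 2 : ℂ)) (𝓝 1) (𝓝 (√2 : ℝ)) := by
  have h : Tendsto (fun z : ℂ ↦ 1 + z) (𝓝 1) (𝓝 2) := by
    simpa [one_add_one_eq_two] using (tendsto_id (x := 𝓝 (1 : ℂ))).const_add 1
  have h2 : ((√2 : ℝ) : ℂ) = (2 : ℂ) ^ (1 / 2 : ℂ) := by
    rw [Real.sqrt_eq_rpow, ofReal_cpow zero_le_two]
    norm_num
  rw [h2]
  exact (continuousAt_cpow_const (by simp)).tendsto.comp h

theorem k1_expansion_at_one :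
    Tendsto (fun z : ℂ => (K1C z - z) / ((1 - z) ^ ((3 : ℂ) / 2)))
      (nhdsWithin 1 Dslit)
      (nhds ((2 * Real.sqrt 2 / (3 * Real.pi) : ℝ) : ℂ)) := by
  have hu := tendsto_cpow_half_one_sub
  have hs := tendsto_cpow_half_one_add
  have hlim := (((continuous_k1Coeff.tendsto _).comp (hu.prodMk_nhds hs)).add
    (((tendsto_const_nhds (x := I)).mul tendsto_id).mul
      (tendsto_log_remainder_div_pow_three hu hs))).div_const (π : ℂ)
  have hval : (k1Coeff 0 (√2 : ℝ) + I * 1 * 0) / π = ((2 * √2 / (3 * π) : ℝ) : ℂ) := by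
    simp only [k1Coeff]
    push_cast
    field_simp
    ring
  rw [← hval]
  exact (hlim.mono_left nhdsWithin_le_nhds).congr'
    (eventually_nhdsWithin_of_forall fun z hz ↦ (K1C_sub_self_div_eq hz rfl rfl).symm)
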